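/- arXiv:1609.04722 — 5 statements merged into one kernel-verified Lean document; each statement's English description precedes it below -/
import Mathlib

section
/- Let x and y be sequences with pairwise distinct symbols (preference orderings over the same item set). For 1 < m ≤ |x|, the set of common subsequences of x and y ending with x_m equals the singleton {x_m} together with all sequences z·x_m where z is a common subsequence of x and y ending with some x_j with j < m and x_j x_m is a common subsequence of x and y. -/
/-- The set of nonempty common subsequences of `x` and `y`. -/
def commonSubseqs {α : Type*} (x y : List α) : Set (List α) :=
  {z | z ≠ [] ∧ z.Sublist x ∧ z.Sublist y}

/-- The set of nonempty common subsequences of `x` and `y` ending with symbol `σ`. -/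
def commonSubseqsEnd {α : Type*} (x y : List α) (σ : α) : Set (List α) :=
  {z ∈ commonSubseqs x y | z.getLast? = some σ}

lemma key_ext {α : Type*} {x l : List α} {a b : α} (hx : x.Nodup) (hl : l.Sublist x)
    (hlast : l.getLast? = some a) (hab : [a, b].Sublist x) : (l ++ [b]).Sublist x := by
  rw [List.cons_sublist_iff] at hab
  obtain ⟨r₁, r₂, rfl, ha, hb⟩ := hab
  rw [List.singleton_sublist] at hb
  rw [List.sublist_append_iff] at hl
  obtain ⟨l₁, l₂, rfl, h1, h2⟩ := hl
  have hl2 : l₂ = [] := by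
    by_contra hne
    have haM : a ∈ l₂ := by
      rw [List.getLast?_append, List.getLast?_eq_getLast hne] at hlast
      simp only [Option.or_some, Option.some_or, Option.some_inj] at hlast
      rw [← hlast]
      exact List.getLast_mem hne
    exact List.disjoint_of_nodup_append hx ha (h2.subset haM)
  subst hl2
  rw [List.append_nil]
  exact h1.append (List.singleton_sublist.mpr hb)

theorem stmt2 {α : Type*} (x y : List α) (hx : x.Nodup) (hperm : y.Perm x)
    (m : Fin x.length) (hm : 0 < (m : ℕ)) :
    commonSubseqsEnd x y (x.get m) =
      {[x.get m]} ∪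
      {w | ∃ j : Fin x.length, (j : ℕ) < (m : ℕ) ∧
        [x.get j, x.get m] ∈ commonSubseqs x y ∧
        ∃ z ∈ commonSubseqsEnd x y (x.get j), w = z ++ [x.get m]} := by
  have hy : y.Nodup := hperm.nodup_iff.mpr hx
  ext w
  constructor
  · rintro ⟨⟨hne, hwx, hwy⟩, hlast⟩
    by_cases hsing : w = [x.get m]
    · exact Or.inl hsing
    · right
      have hw : w.dropLast ++ [x.get m] = w := by
        have h1 := List.dropLast_append_getLast hne
        rw [List.getLast?_eq_getLast hne, Option.some_inj] at hlast
        rw [hlast] at h1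
        exact h1
      set w' := w.dropLast with hw'
      have hw'ne : w' ≠ [] := by
        intro h
        rw [h, List.nil_append] at hw
        exact hsing hw.symm
      set σ := w'.getLast hw'ne with hσ
      have hw2 : (w'.dropLast ++ [σ]) ++ [x.get m] = w := by
        rw [List.dropLast_append_getLast hw'ne]; exact hw
      have hsub : ([σ, x.get m]).Sublist w := by
        rw [← hw2]
        exact ((List.sublist_append_right w'.dropLast [σ]).append (List.Sublist.refl _))
      have hsx : ([σ, x.get m]).Sublist x := hsub.trans hwx
      have hsy : ([σ, x.get m]).Sublist y := hsub.trans hwy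
      -- find j
      obtain ⟨r₁, r₂, hx12, hσr, hmr⟩ := List.cons_sublist_iff.mp hsx
      rw [List.singleton_sublist] at hmr
      obtain ⟨n, hn, hgn⟩ := List.mem_iff_getElem.mp hσr
      obtain ⟨k, hk, hgk⟩ := List.mem_iff_getElem.mp hmr
      subst hx12
      have hnlen : n < (r₁ ++ r₂).length := by rw [List.length_append]; omega
      have hgj : (r₁ ++ r₂).get ⟨n, hnlen⟩ = σ := by
        simp only [List.get_eq_getElem]
        rw [List.getElem_append_left hn]
        exact hgn
      refine ⟨⟨n, hnlen⟩, ?_, ?_, w', ?_, (hw2 ▸ hw.symm : w = w' ++ [(r₁ ++ r₂).get m])⟩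
      · have hmk : (m : ℕ) = r₁.length + k := by
          have h1 : (r₁ ++ r₂)[(r₁.length + k)]'(by rw [List.length_append]; omega)
              = (r₁ ++ r₂).get m := by
            rw [List.getElem_append_right (by omega)]
            simpa using hgk
          have h2 := hx.getElem_inj_iff.mp (by simpa only [List.get_eq_getElem] using h1)
          omega
        simpa using by omega
      · exact ⟨by simp, hgj ▸ hsx, hgj ▸ hsy⟩
      · have hw'w : w'.Sublist w := List.dropLast_sublist w
        exact ⟨⟨hw'ne, hw'w.trans hwx, hw'w.trans hwy⟩,
          by rw [List.getLast?_eq_getLast hw'ne, hgj]⟩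
  · rintro (rfl | ⟨j, hjm, ⟨_, habx, haby⟩, z, ⟨⟨hzne, hzx, hzy⟩, hzlast⟩, rfl⟩)
    · refine ⟨⟨by simp, List.singleton_sublist.mpr (by simp), ?_⟩, by simp⟩
      exact List.singleton_sublist.mpr (hperm.mem_iff.mpr (by simp))
    · refine ⟨⟨by simp, key_ext hx hzx hzlast habx, key_ext hy hzy hzlast haby⟩, ?_⟩
      simp [List.getLast?_append]
end

section
/- Let x and y be preference orderings with distinct symbols. Then κ(x,y), the number of nonempty common subsequences of x and y, satisfies κ(x,y) = Σ_{m=1}^{|x|} κ(x,y:x_m), where κ(x,y:x_1) = 1 if x_1 occurs in y else 0, and for m > 1, κ(x,y:x_m) equals (if x_m occurs in y) 1 plus the sum over j < m with x_j x_m ⊑ y of κ(x,y:x_j), and equals 0 if x_m does not occur in y. -/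
section Aux
open List
variable {α : Type*}

lemma getLast?_mem' {l : List α} {b : α} (h : l.getLast? = some b) : b ∈ l := by
  obtain ⟨hne, rfl⟩ := List.mem_getLast?_eq_getLast h; exact List.getLast_mem hne

lemma sub_append {y : List α} (hy : y.Nodup) : ∀ {w : List α} {a b : α},
    w.Sublist y → w.getLast? = some b → [b, a].Sublist y → (w ++ [a]).Sublist y := by
  induction y with
  | nil => intro w a b hw hl _; simp at hw; subst hw; simp at hl
  | cons c t ih =>
    intro w a b hw hl hba
    have hct : c ∉ t := (List.nodup_cons.1 hy).1
    rcases List.sublist_cons_iff.1 hba with h | ⟨r, hr, hrt⟩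
    · have hbt : b ∈ t := h.mem (by simp)
      rcases List.sublist_cons_iff.1 hw with h2 | ⟨r2, hr2, hrt2⟩
      · exact (ih (List.nodup_cons.1 hy).2 h2 hl h).cons c
      · subst hr2
        rcases r2 with _ | ⟨d, r2'⟩
        · simp at hl; subst hl; exact absurd hbt hct
        · have hl' : (d :: r2').getLast? = some b := by
            rwa [List.getLast?_cons_cons] at hl
          have := ih (List.nodup_cons.1 hy).2 hrt2 hl' h
          simpa using this.cons₂ c
    · have hbc : b = c := by injection hr
      have hra : r = [a] := by injection hr with _ h'; exact h'.symm
      subst hbc hra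
      rcases List.sublist_cons_iff.1 hw with h2 | ⟨r2, hr2, hrt2⟩
      · exact absurd (h2.mem (getLast?_mem' hl)) hct
      · subst hr2
        rcases r2 with _ | ⟨d, r2'⟩
        · simpa using hrt.cons₂ b
        · have hl' : (d :: r2').getLast? = some b := by
            rwa [List.getLast?_cons_cons] at hl
          exact absurd (hrt2.mem (getLast?_mem' hl')) hct

lemma indexOf_lt_of_pair [DecidableEq α] {x : List α} (hx : x.Nodup) {a b : α}
    (h : [b, a].Sublist x) : x.idxOf b < x.idxOf a := by
  induction x with
  | nil => simp at h
  | cons c t ih =>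
    have hct : c ∉ t := (List.nodup_cons.1 hx).1
    rcases List.sublist_cons_iff.1 h with h' | ⟨r, hr, hrt⟩
    · have hbt : b ∈ t := h'.mem (by simp)
      have hat : a ∈ t := h'.mem (by simp)
      have hbc : b ≠ c := fun e => hct (e ▸ hbt)
      have hac : a ≠ c := fun e => hct (e ▸ hat)
      have := ih (List.nodup_cons.1 hx).2 h'
      simp [List.idxOf_cons, cond_eq_if, beq_iff_eq, Ne.symm hbc, Ne.symm hac]
      omega
    · have hbc : b = c := by injection hr
      have hra : r = [a] := by injection hr with _ h'; exact h'.symm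
      subst hbc hra
      have hat : a ∈ t := hrt.mem (by simp)
      have hac : a ≠ b := fun e => hct (e ▸ hat)
      simp [List.idxOf_cons, cond_eq_if, beq_iff_eq, Ne.symm hac]

lemma pair_sublist_of_lt {x : List α} {i j : Fin x.length} (h : (i : ℕ) < j) :
    [x.get i, x.get j].Sublist x := by
  have h1 : [x.get i].Sublist (x.take (i + 1)) := by
    rw [List.singleton_sublist, List.mem_take_iff_getElem]
    exact ⟨i, by omega, by simp⟩
  have h2 : [x.get j].Sublist (x.drop (i + 1)) := by
    rw [List.singleton_sublist, List.mem_drop_iff_getElem]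
    exact ⟨(j : ℕ) - (i + 1), by omega, by congr 1; omega⟩
  have := h1.append h2
  simpa using this

lemma eq_singleton_of_last_head {a : α} {t z : List α} (hat : a ∉ t)
    (hz : z.Sublist (a :: t)) (hl : z.getLast? = some a) : z = [a] := by
  rcases List.sublist_cons_iff.1 hz with h | ⟨r, hr, hrt⟩
  · exact absurd (h.mem (getLast?_mem' hl)) hat
  · subst hr
    rcases r with _ | ⟨d, r'⟩
    · rfl
    · have hl' : (d :: r').getLast? = some a := by
        rwa [List.getLast?_cons_cons] at hl
      exact absurd (hrt.mem (getLast?_mem' hl')) hat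

end Aux

section Aux2
variable {α : Type*}

lemma cs_finite (x y : List α) : (commonSubseqs x y).Finite := by
  classical
  have h1 : {z : List α | z.Sublist x}.Finite :=
    Set.Finite.ofFinset x.sublists.toFinset (by simp [List.mem_sublists])
  exact h1.subset (fun z hz => hz.2.1)

lemma csE_finite (x y : List α) (σ : α) : (commonSubseqsEnd x y σ).Finite :=
  (cs_finite x y).subset (fun z hz => hz.1)

lemma csE_empty_of_not_mem (x y : List α) {σ : α} (h : σ ∉ y) :
    commonSubseqsEnd x y σ = ∅ := by
  ext z
  simp only [commonSubseqsEnd, commonSubseqs, Set.mem_setOf_eq, Set.mem_empty_iff_false,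
    iff_false]
  rintro ⟨⟨_, _, hzy⟩, hl⟩
  exact h (hzy.mem (getLast?_mem' hl))

end Aux2

theorem stmt4 {α : Type*} [DecidableEq α] (x y : List α)
    (hx : x.Nodup) (hy : y.Nodup) (hne : x ≠ []) :
    (commonSubseqs x y).ncard = ∑ m : Fin x.length, (commonSubseqsEnd x y (x.get m)).ncard ∧
    (commonSubseqsEnd x y (x.head hne)).ncard = (if x.head hne ∈ y then 1 else 0) ∧
    ∀ m : Fin x.length, 0 < (m : ℕ) →
      (commonSubseqsEnd x y (x.get m)).ncard =
        if x.get m ∈ y then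
          1 + ∑ j ∈ Finset.univ.filter
                (fun j : Fin x.length => (j : ℕ) < (m : ℕ) ∧ [x.get j, x.get m].Sublist y),
              (commonSubseqsEnd x y (x.get j)).ncard
        else 0 := by
  classical
  have hEfin : ∀ σ, (commonSubseqsEnd x y σ).Finite := csE_finite x y
  -- distinct ends give disjoint sets
  have hdisjE : ∀ σ τ : α, σ ≠ τ →
      Disjoint (commonSubseqsEnd x y σ) (commonSubseqsEnd x y τ) := by
    intro σ τ hst
    rw [Set.disjoint_left]
    rintro z ⟨_, hz1⟩ ⟨_, hz2⟩
    exact hst (by rw [hz1] at hz2; injection hz2)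
  have hgetinj : ∀ {i j : Fin x.length}, x.get i = x.get j → i = j :=
    fun h => (hx.get_inj_iff).1 h
  refine ⟨?_, ?_, ?_⟩
  · -- Part 1
    have hset : (cs_finite x y).toFinset =
        Finset.univ.biUnion (fun m : Fin x.length => (hEfin (x.get m)).toFinset) := by
      ext z
      simp only [Set.Finite.mem_toFinset, Finset.mem_biUnion, Finset.mem_univ, true_and]
      constructor
      · rintro ⟨hz0, hzx, hzy⟩
        obtain ⟨b, hb⟩ : ∃ b, z.getLast? = some b := by
          rcases z with _ | ⟨c, t⟩
          · exact absurd rfl hz0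
          · exact ⟨_, List.getLast?_eq_getLast (by simp)⟩
        have hbx : b ∈ x := hzx.mem (getLast?_mem' hb)
        refine ⟨⟨x.idxOf b, List.idxOf_lt_length_iff.2 hbx⟩, ⟨hz0, hzx, hzy⟩, ?_⟩
        rw [hb]
        congr 1
        exact (List.getElem_idxOf _).symm
      · rintro ⟨m, hm, _⟩
        exact hm
    rw [Set.ncard_eq_toFinset_card _ (cs_finite x y), hset, Finset.card_biUnion]
    · exact Finset.sum_congr rfl (fun m _ =>
        (Set.ncard_eq_toFinset_card _ (hEfin (x.get m))).symm)
    · intro i _ j _ hij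
      have : x.get i ≠ x.get j := fun h => hij (hgetinj h)
      rw [Function.onFun, Finset.disjoint_left]
      intro z hz1 hz2
      simp only [Set.Finite.mem_toFinset] at hz1 hz2
      exact (Set.disjoint_left.1 (hdisjE _ _ this) hz1) hz2
  · -- Part 2
    set a := x.head hne with ha
    obtain ⟨t, hxt⟩ : ∃ t, x = a :: t := ⟨x.tail, (List.cons_head_tail hne).symm⟩
    have hat : a ∉ t := by
      rw [hxt] at hx; exact (List.nodup_cons.1 hx).1
    by_cases hay : a ∈ y
    · rw [if_pos hay]
      have : commonSubseqsEnd x y a = {[a]} := by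
        ext z
        simp only [commonSubseqsEnd, commonSubseqs, Set.mem_setOf_eq, Set.mem_singleton_iff]
        constructor
        · rintro ⟨⟨_, hzx, _⟩, hl⟩
          exact eq_singleton_of_last_head hat (hxt ▸ hzx) hl
        · rintro rfl
          exact ⟨⟨by simp, by rw [hxt]; simpa using List.nil_sublist t,
            List.singleton_sublist.2 hay⟩, rfl⟩
      rw [this, Set.ncard_singleton]
    · rw [if_neg hay, csE_empty_of_not_mem x y hay, Set.ncard_empty]
  · -- Part 3
    intro m hm
    set a := x.get m with ha
    by_cases hay : a ∈ y
    · rw [if_pos hay]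
      set J := Finset.univ.filter
        (fun j : Fin x.length => (j : ℕ) < (m : ℕ) ∧ [x.get j, x.get m].Sublist y) with hJ
      have hmidx : x.idxOf a = (m : ℕ) := by
        have h1 : x.idxOf a < x.length := List.idxOf_lt_length_iff.2 (by
          rw [ha]; exact x.get_mem m)
        have : x.get ⟨x.idxOf a, h1⟩ = x.get m := by
          rw [← ha]; exact List.getElem_idxOf h1
        have := hgetinj this
        exact congrArg Fin.val this
      have hkey : (hEfin a).toFinset =
          insert [a] (J.biUnion (fun j =>
            ((hEfin (x.get j)).toFinset).image (· ++ [a]))) := by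
        ext z
        simp only [Set.Finite.mem_toFinset, Finset.mem_insert, Finset.mem_biUnion,
          Finset.mem_image, Set.Finite.mem_toFinset, hJ, Finset.mem_filter,
          Finset.mem_univ, true_and]
        constructor
        · rintro ⟨⟨hz0, hzx, hzy⟩, hl⟩
          have hzsplit : z.dropLast ++ [a] = z := List.dropLast_append_getLast? a hl
          rcases eq_or_ne z.dropLast [] with hdl | hdl
          · left; rw [← hzsplit, hdl]; rfl
          · right
            set w := z.dropLast with hw
            obtain ⟨b, hb⟩ : ∃ b, w.getLast? = some b :=
              ⟨w.getLast hdl, List.getLast?_eq_getLast hdl⟩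
            have hwx : w.Sublist x := (List.dropLast_sublist z).trans hzx
            have hwy : w.Sublist y := (List.dropLast_sublist z).trans hzy
            have hba : [b, a].Sublist z := by
              have h2 : w.dropLast ++ [b] = w := List.dropLast_append_getLast? b hb
              have : z = w.dropLast ++ [b, a] := by
                rw [← hzsplit, ← h2]; simp
              rw [this]
              exact List.sublist_append_right _ _
            have hbax : [b, a].Sublist x := hba.trans hzx
            have hbay : [b, a].Sublist y := hba.trans hzy
            have hbx : b ∈ x := hbax.mem (by simp)
            refine ⟨⟨x.idxOf b, List.idxOf_lt_length_iff.2 hbx⟩, ⟨?_, ?_⟩, w, ⟨⟨hdl, hwx, hwy⟩, ?_⟩, hzsplit⟩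
            · simp only [← hmidx]
              exact indexOf_lt_of_pair hx hbax
            · have : x.get ⟨x.idxOf b, List.idxOf_lt_length_iff.2 hbx⟩ = b :=
                List.getElem_idxOf _
              rw [this, ← ha]; exact hbay
            · have : x.get ⟨x.idxOf b, List.idxOf_lt_length_iff.2 hbx⟩ = b :=
                List.getElem_idxOf _
              rw [this]; exact hb
        · rintro (rfl | ⟨j, ⟨hjm, hjy⟩, w, ⟨⟨hw0, hwx, hwy⟩, hwl⟩, rfl⟩)
          · exact ⟨⟨by simp, List.singleton_sublist.2 (x.get_mem m),
              List.singleton_sublist.2 hay⟩, rfl⟩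
          · refine ⟨⟨by simp, ?_, ?_⟩, ?_⟩
            · exact sub_append hx hwx hwl (pair_sublist_of_lt hjm)
            · exact sub_append hy hwy hwl hjy
            · rw [List.getLast?_append_of_ne_nil w (by simp)]; rfl
      have hnotmem : [a] ∉ J.biUnion (fun j =>
          ((hEfin (x.get j)).toFinset).image (· ++ [a])) := by
        simp only [Finset.mem_biUnion, Finset.mem_image, Set.Finite.mem_toFinset]
        rintro ⟨j, hj, w, hw, hcontra⟩
        have hwnil : w = [] := by
          have := congrArg List.dropLast hcontra
          simpa using this
        exact hw.1.1 hwnil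
      have hdisj2 : ∀ i ∈ J, ∀ j ∈ J, i ≠ j →
          Disjoint (((hEfin (x.get i)).toFinset).image (· ++ [a]))
            (((hEfin (x.get j)).toFinset).image (· ++ [a])) := by
        intro i _ j _ hij
        have hne' : x.get i ≠ x.get j := fun h => hij (hgetinj h)
        rw [Finset.disjoint_left]
        rintro z hz1 hz2
        simp only [Finset.mem_image, Set.Finite.mem_toFinset] at hz1 hz2
        obtain ⟨w, hw, rfl⟩ := hz1
        obtain ⟨w', hw', he⟩ := hz2
        have : w' = w := by simpa using he
        subst this
        exact hne' (by rw [← Option.some_inj, ← hw.2, ← hw'.2])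
      rw [Set.ncard_eq_toFinset_card _ (hEfin a), hkey,
        Finset.card_insert_of_notMem hnotmem, Finset.card_biUnion hdisj2, Nat.add_comm]
      congr 1
      refine Finset.sum_congr rfl (fun j _ => ?_)
      rw [Finset.card_image_of_injective _ (fun w w' h => by simpa using h)]
      exact (Set.ncard_eq_toFinset_card _ (hEfin (x.get j))).symm
    · rw [if_neg hay, csE_empty_of_not_mem x y hay, Set.ncard_empty]
end

section
/- Let X be a set of preference orderings over n items (each sequence is a permutation of the same n-element alphabet). Then the normalized concordance κ̂(X) = κ(X) / (2^n − 1) satisfies 0 ≤ κ̂(X) ≤ 1, and κ̂(X) = 1 if and only if all sequences in X are equal. -/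
/-- The set of nonempty subsequences of `x`. -/
def subseqs {α : Type*} (x : List α) : Set (List α) := {z | z ≠ [] ∧ z.Sublist x}

/-- The set of nonempty common subsequences of a set `X` of sequences. -/
def commonSubseqsSet {α : Type*} (X : Set (List α)) : Set (List α) := ⋂ x ∈ X, subseqs x

lemma subseqs_eq_coe {α : Type*} [DecidableEq α] (x : List α) :
    subseqs x = ↑((x.sublists.toFinset).erase []) := by
  ext z
  simp [subseqs, List.mem_sublists, and_comm]

lemma subseqs_finite {α : Type*} [DecidableEq α] (x : List α) : (subseqs x).Finite := by
  rw [subseqs_eq_coe]; exact Set.finite_coe_iff.mp inferInstance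

lemma subseqs_ncard {α : Type*} [DecidableEq α] (x : List α) (hx : x.Nodup) :
    (subseqs x).ncard = 2 ^ x.length - 1 := by
  rw [subseqs_eq_coe, Set.ncard_coe_finset, Finset.card_erase_of_mem (by simp),
    List.toFinset_card_of_nodup (List.nodup_sublists.mpr hx), List.length_sublists]

theorem stmt8 {α : Type*} [DecidableEq α] (n : ℕ) (hn : 0 < n) (s : Finset α)
    (hs : s.card = n) (X : Set (List α)) (hX : X.Nonempty)
    (hperm : ∀ x ∈ X, x.Nodup ∧ x.toFinset = s) :
    0 ≤ ((commonSubseqsSet X).ncard : ℚ) / (2 ^ n - 1) ∧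
    ((commonSubseqsSet X).ncard : ℚ) / (2 ^ n - 1) ≤ 1 ∧
    (((commonSubseqsSet X).ncard : ℚ) / (2 ^ n - 1) = 1 ↔ ∀ x ∈ X, ∀ y ∈ X, x = y) := by
  obtain ⟨x₀, hx₀⟩ := hX
  have hlen : ∀ x ∈ X, x.length = n := by
    intro x hx
    obtain ⟨hnd, hts⟩ := hperm x hx
    rw [← List.toFinset_card_of_nodup hnd, hts, hs]
  have hsub : commonSubseqsSet X ⊆ subseqs x₀ := by
    intro z hz
    exact Set.mem_iInter₂.mp hz x₀ hx₀
  have hfin : (commonSubseqsSet X).Finite := (subseqs_finite x₀).subset hsub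
  have hcard0 : (subseqs x₀).ncard = 2 ^ n - 1 := by
    rw [subseqs_ncard x₀ (hperm x₀ hx₀).1, hlen x₀ hx₀]
  have hle : (commonSubseqsSet X).ncard ≤ 2 ^ n - 1 := by
    rw [← hcard0]
    exact Set.ncard_le_ncard hsub (subseqs_finite x₀)
  have h2 : (1 : ℚ) < 2 ^ n := by
    have : (1 : ℚ) < 2 := one_lt_two
    calc (1:ℚ) < 2 := this
      _ ≤ 2 ^ n := by exact le_self_pow₀ (by norm_num) hn.ne'
  have hden : (0 : ℚ) < 2 ^ n - 1 := by linarith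
  have hcast : ((2 ^ n - 1 : ℕ) : ℚ) = 2 ^ n - 1 := by
    push_cast [Nat.one_le_two_pow]
    ring
  refine ⟨by positivity, ?_, ?_⟩
  · rw [div_le_one hden, ← hcast]
    exact_mod_cast hle
  constructor
  · intro h
    have hne : (commonSubseqsSet X).ncard = 2 ^ n - 1 := by
      rw [div_eq_one_iff_eq hden.ne', ← hcast] at h
      exact_mod_cast h
    have heq : commonSubseqsSet X = subseqs x₀ := by
      apply Set.eq_of_subset_of_ncard_le hsub _ (subseqs_finite x₀)
      rw [hne, hcard0]
    have hall : ∀ x ∈ X, x = x₀ := by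
      intro x hx
      have hx₀ne : x₀ ≠ [] := by
        intro hc
        have := hlen x₀ hx₀
        rw [hc] at this
        simp at this
        omega
      have hmem : x₀ ∈ commonSubseqsSet X := by
        rw [heq]; exact ⟨hx₀ne, List.Sublist.refl x₀⟩
      have hsl : x₀.Sublist x := (Set.mem_iInter₂.mp hmem x hx).2
      exact (hsl.eq_of_length (by rw [hlen x hx, hlen x₀ hx₀])).symm
    intro x hx y hy
    rw [hall x hx, hall y hy]
  · intro h
    have heq : commonSubseqsSet X = subseqs x₀ := by
      apply Set.eq_of_subset_of_subset hsub
      intro z hz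
      apply Set.mem_iInter₂.mpr
      intro x hx
      rwa [h x hx x₀ hx₀]
    rw [heq, hcard0, hcast, div_self hden.ne']
end

section
/- Let X = {x_1,…,x_N} be preference orderings over the same n items and let T be the n×n truth-table with T[j][i] = 1 (for i < j) iff the two-symbol sequence x_{1i} x_{1j} is a common subsequence of all sequences in X, and T[j][j] = 1 iff x_{1j} occurs in all sequences. Define ψ(i) = 0 if T[i][i] = 0, and ψ(i) = 1 + max{0, T[i][j]·ψ(j) : 1 ≤ j < i} otherwise. Then ψ(i) equals the maximal length of a common subsequence of X ending with the symbol x_{1i}, and ℓ(X) = max_i ψ(i). -/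
lemma aux_pairwise_self {α : Type*} (x : List α) :
    x.Pairwise (fun a b => [a, b].Sublist x) := by
  induction x with
  | nil => simp
  | cons c t ih =>
    refine List.Pairwise.cons (fun b hb => ?_) (ih.imp fun h => h.trans (List.sublist_cons_self c t))
    exact List.cons_sublist_cons.2 (List.singleton_sublist.2 hb)

lemma aux_idxOf_lt {α : Type*} [DecidableEq α] :
    ∀ {x : List α}, x.Nodup → ∀ {a b : α}, [a, b].Sublist x →
      x.idxOf a < x.idxOf b := by
  intro x
  induction x with
  | nil => intro _ a b h; simp at h
  | cons c t ih =>
    intro hnd a b h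
    have hct : c ∉ t := (List.nodup_cons.1 hnd).1
    cases h with
    | cons _ h' =>
      have ha : a ∈ t := h'.subset (by simp)
      have hb : b ∈ t := h'.subset (by simp)
      rw [List.idxOf_cons_ne _ (fun h => hct (by rw [h]; exact ha)),
          List.idxOf_cons_ne _ (fun h => hct (by rw [h]; exact hb))]
      exact Nat.succ_lt_succ (ih (List.nodup_cons.1 hnd).2 h')
    | cons_cons _ h' =>
      have hb : b ∈ t := h'.subset (by simp)
      rw [List.idxOf_cons_self, List.idxOf_cons_ne _ (fun h => hct (by rw [h]; exact hb))]
      exact Nat.succ_pos _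

lemma aux_lt_idxOf {α : Type*} [DecidableEq α] :
    ∀ {x : List α} {a b : α}, a ∈ x → b ∈ x → x.idxOf a < x.idxOf b →
      [a, b].Sublist x := by
  intro x
  induction x with
  | nil => intro a b h; simp at h
  | cons c t ih =>
    intro a b ha hb hlt
    by_cases hac : a = c
    · subst hac
      have hbc : b ≠ a := by
        intro h; subst h; exact lt_irrefl _ hlt
      have hbt : b ∈ t := (List.mem_cons.1 hb).resolve_left hbc
      exact List.cons_sublist_cons.2 (List.singleton_sublist.2 hbt)
    · have hbc : b ≠ c := by
        intro h; subst h
        rw [List.idxOf_cons_self] at hlt; omega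
      have hat : a ∈ t := (List.mem_cons.1 ha).resolve_left hac
      have hbt : b ∈ t := (List.mem_cons.1 hb).resolve_left hbc
      rw [List.idxOf_cons_ne _ (Ne.symm hac), List.idxOf_cons_ne _ (Ne.symm hbc)] at hlt
      exact (ih hat hbt (Nat.lt_of_succ_lt_succ hlt)).cons c

/-- pairwise pair-sublists of a nodup list give a sublist -/
lemma aux_pairwise_sublist {α : Type*} :
    ∀ (x : List α), x.Nodup → ∀ (z : List α), z.Nodup → (∀ a ∈ z, a ∈ x) →
      z.Pairwise (fun a b => [a, b].Sublist x) → z.Sublist x := by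
  intro x
  induction x with
  | nil =>
    intro _ z _ hmem _
    cases z with
    | nil => exact List.Sublist.refl _
    | cons d t' => exact absurd (hmem d (by simp)) (by simp)
  | cons c t ih =>
    intro hx z hz hmem hpw
    have hct : c ∉ t := (List.nodup_cons.1 hx).1
    have htnd : t.Nodup := (List.nodup_cons.1 hx).2
    by_cases hc : c ∈ z
    · obtain ⟨d, t', rfl⟩ : ∃ d t', z = d :: t' := by
        cases z with
        | nil => simp at hc
        | cons d t' => exact ⟨d, t', rfl⟩
      have hdc : d = c := by
        by_contra hne
        have hct' : c ∈ t' := (List.mem_cons.1 hc).resolve_left (Ne.symm hne)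
        have hpair : [d, c].Sublist (c :: t) := (List.pairwise_cons.1 hpw).1 c hct'
        cases hpair with
        | cons _ h' => exact hct (h'.subset (by simp))
        | cons_cons _ h' =>
          exact hct (List.singleton_sublist.1 h')
      subst hdc
      have hdt' : d ∉ t' := (List.nodup_cons.1 hz).1
      refine List.cons_sublist_cons.2 (ih htnd t' (List.nodup_cons.1 hz).2 ?_ ?_)
      · intro a hat'
        have : a ∈ d :: t := hmem a (by simp [hat'])
        exact (List.mem_cons.1 this).resolve_left (fun h => hdt' (h ▸ hat'))
      · refine (List.pairwise_cons.1 hpw).2.imp_of_mem (fun {a b} ha hb hpair => ?_)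
        cases hpair with
        | cons _ h' => exact h'
        | cons_cons _ h' => exact absurd ha hdt'
    · refine (ih htnd z hz ?_ ?_).cons c
      · intro a haz
        exact (List.mem_cons.1 (hmem a haz)).resolve_left (fun h => hc (h ▸ haz))
      · refine hpw.imp_of_mem (fun {a b} ha hb hpair => ?_)
        cases hpair with
        | cons _ h' => exact h'
        | cons_cons _ h' => exact absurd ha hc

lemma aux_extend {α : Type*} [DecidableEq α] {x z : List α} {a b : α}
    (hx : x.Nodup) (hzx : z.Sublist x) (hlast : z.getLast? = some a)
    (hab : [a, b].Sublist x) : (z ++ [b]).Sublist x := by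
  have hzne : z ≠ [] := by intro h; subst h; simp at hlast
  have ha_last : z.getLast hzne = a := by
    rw [List.getLast?_eq_getLast hzne] at hlast
    exact Option.some.inj hlast
  have hz_eq : z.dropLast ++ [a] = z := ha_last ▸ List.dropLast_append_getLast hzne
  have hzn : z.Nodup := hzx.nodup hx
  have hmem_last : ∀ e ∈ z, e = a ∨ [e, a].Sublist z := by
    intro e he
    rw [← hz_eq] at he
    rcases List.mem_append.1 he with h | h
    · right
      rw [← hz_eq]
      exact List.Sublist.append (List.singleton_sublist.2 h) (List.Sublist.refl _)
    · left; simpa using h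
  have hne : a ≠ b := by
    have := hab.nodup hx
    simp at this; exact this
  have hax : a ∈ x := hab.subset (by simp)
  have hbx : b ∈ x := hab.subset (by simp)
  have hbz : b ∉ z := by
    intro hb
    rcases hmem_last b hb with h | h
    · exact hne h.symm
    · exact lt_asymm (aux_idxOf_lt hx hab) (aux_idxOf_lt hx (h.trans hzx))
  refine aux_pairwise_sublist x hx _ ?_ ?_ ?_
  · rw [List.nodup_append]
    exact ⟨hzn, List.nodup_singleton b, by simpa using fun a (ha : a ∈ z) (h : a = b) => hbz (h ▸ ha)⟩
  · intro e he
    rcases List.mem_append.1 he with h | h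
    · exact hzx.subset h
    · simp at h; subst h; exact hbx
  · rw [List.pairwise_append]
    refine ⟨(aux_pairwise_self x).sublist hzx, List.pairwise_singleton _ _, ?_⟩
    intro e he b' hb'
    simp at hb'; subst hb'
    rcases hmem_last e he with h | h
    · subst h; exact hab
    · have h1 := aux_idxOf_lt hx (h.trans hzx)
      have h2 := aux_idxOf_lt hx hab
      exact aux_lt_idxOf (hzx.subset he) hbx (h1.trans h2)

lemma aux_idxOf_get {α : Type*} [DecidableEq α] {x : List α} (h : x.Nodup)
    (i : Fin x.length) : x.idxOf (x.get i) = (i : ℕ) := by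
  have hm : x.get i ∈ x := x.get_mem i
  have hl : x.idxOf (x.get i) < x.length := List.idxOf_lt_length_iff.2 hm
  have h2 : x[x.idxOf (x.get i)] = x.get i := List.getElem_idxOf hl
  exact (h.getElem_inj_iff (hi := hl) (hj := i.2)).1 (by simpa using h2)

theorem stmt15 {α : Type*} [DecidableEq α] (X : Finset (List α)) (x1 : List α)
    (hx1 : x1 ∈ X) (hnd : x1.Nodup) (hperm : ∀ x ∈ X, x.Perm x1)
    (ψ : Fin x1.length → ℕ)
    (hψ : ∀ i : Fin x1.length, ψ i =
      if (∀ x ∈ X, x1.get i ∈ x) then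
        1 + (Finset.univ.filter
              (fun j : Fin x1.length => (j : ℕ) < (i : ℕ) ∧
                ∀ x ∈ X, [x1.get j, x1.get i].Sublist x)).sup (fun j => ψ j)
      else 0) :
    (∀ i : Fin x1.length,
      ψ i = sSup {k | ∃ z : List α, z ≠ [] ∧ (∀ x ∈ X, z.Sublist x) ∧
        z.getLast? = some (x1.get i) ∧ z.length = k}) ∧
    sSup {k | ∃ z : List α, z ≠ [] ∧ (∀ x ∈ X, z.Sublist x) ∧ z.length = k} =
      Finset.univ.sup ψ := by
  classical
  set S : Fin x1.length → Set ℕ := fun i =>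
    {k | ∃ z : List α, z ≠ [] ∧ (∀ x ∈ X, z.Sublist x) ∧
      z.getLast? = some (x1.get i) ∧ z.length = k} with hS
  set Fil : Fin x1.length → Finset (Fin x1.length) := fun i =>
    Finset.univ.filter
      (fun j : Fin x1.length => (j : ℕ) < (i : ℕ) ∧
        ∀ x ∈ X, [x1.get j, x1.get i].Sublist x) with hFil
  have hmem : ∀ (i : Fin x1.length), ∀ x ∈ X, x1.get i ∈ x := fun i x hx =>
    ((hperm x hx).mem_iff).2 (x1.get_mem i)
  have hψ' : ∀ i, ψ i = 1 + (Fil i).sup ψ := by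
    intro i
    rw [hψ i, if_pos (hmem i)]
  have hxnd : ∀ x ∈ X, x.Nodup := fun x hx => ((hperm x hx).nodup_iff).2 hnd
  have hsingle : ∀ i, (1 : ℕ) ∈ S i := by
    intro i
    exact ⟨[x1.get i], by simp, fun x hx => List.singleton_sublist.2 (hmem i x hx),
      by simp, rfl⟩
  have hSne : ∀ i, (S i).Nonempty := fun i => ⟨1, hsingle i⟩
  have hbdd : ∀ i, BddAbove (S i) := by
    intro i
    refine ⟨x1.length, ?_⟩
    rintro k ⟨z, _, hc, _, rfl⟩
    exact (hc x1 hx1).length_le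
  -- main claim by strong induction
  have key : ∀ m : ℕ, ∀ i : Fin x1.length, (i : ℕ) = m → ψ i = sSup (S i) := by
    intro m
    induction m using Nat.strong_induction_on with
    | _ m IH =>
      intro i him
      apply le_antisymm
      · -- ψ i ≤ sSup (S i)
        rw [hψ' i]
        rcases Finset.eq_empty_or_nonempty (Fil i) with hF | hF
        · rw [hF]
          simpa using le_csSup (hbdd i) (hsingle i)
        · obtain ⟨j, hjmem, hjsup⟩ := Finset.exists_mem_eq_sup _ hF ψ
          have hj' := Finset.mem_filter.1 hjmem
          have hlt : (j : ℕ) < (i : ℕ) := hj'.2.1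
          have hψj : ψ j = sSup (S j) := IH j (by omega) j rfl
          have hmemS : sSup (S j) ∈ S j := Nat.sSup_mem (hSne j) (hbdd j)
          obtain ⟨z, hzne, hzc, hzlast, hzlen⟩ := hmemS
          have hC : ∀ x ∈ X, (z ++ [x1.get i]).Sublist x := fun x hx =>
            aux_extend (hxnd x hx) (hzc x hx) hzlast (hj'.2.2 x hx)
          have hin : ψ j + 1 ∈ S i := by
            refine ⟨z ++ [x1.get i], by simp, hC, List.getLast?_concat, ?_⟩
            simp [hzlen, hψj]
          calc 1 + (Fil i).sup ψ = ψ j + 1 := by rw [hjsup]; ring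
            _ ≤ sSup (S i) := le_csSup (hbdd i) hin
      · -- sSup (S i) ≤ ψ i
        apply csSup_le (hSne i)
        rintro k ⟨z, hzne, hzc, hzlast, rfl⟩
        have hzx1 : z.Sublist x1 := hzc x1 hx1
        have hglast : z.getLast hzne = x1.get i := by
          rw [List.getLast?_eq_getLast hzne] at hzlast
          exact Option.some.inj hzlast
        have hz_eq : z.dropLast ++ [x1.get i] = z := hglast ▸ List.dropLast_append_getLast hzne
        rcases eq_or_ne z.dropLast [] with hd | hd
        · have hzpos : 0 < z.length := List.length_pos_iff.2 hzne
          have hdl : z.length - 1 = 0 := by rw [← List.length_dropLast, hd]; rfl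
          rw [hψ' i]
          omega
        · set w := z.dropLast with hw
          set a := w.getLast hd with ha
          have hwz : w.Sublist z := List.dropLast_sublist z
          have haw : a ∈ x1 := (hwz.trans hzx1).subset (List.getLast_mem hd)
          have hjn : x1.idxOf a < x1.length := List.idxOf_lt_length_iff.2 haw
          set j : Fin x1.length := ⟨x1.idxOf a, hjn⟩ with hj
          have hgj : x1.get j = a := List.getElem_idxOf hjn
          have hpairz : [x1.get j, x1.get i].Sublist z := by
            rw [hgj, ← hz_eq]
            exact List.Sublist.append (List.singleton_sublist.2 (List.getLast_mem hd))
              (List.Sublist.refl _)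
          have hpair : ∀ x ∈ X, [x1.get j, x1.get i].Sublist x := fun x hx =>
            hpairz.trans (hzc x hx)
          have hji : (j : ℕ) < (i : ℕ) := by
            have h1 := aux_idxOf_lt hnd (hpair x1 hx1)
            rwa [aux_idxOf_get hnd j, aux_idxOf_get hnd i] at h1
          have hwin : z.length - 1 ∈ S j := by
            refine ⟨w, hd, fun x hx => hwz.trans (hzc x hx), ?_, by simp [hw]⟩
            rw [hgj]
            exact List.getLast?_eq_getLast hd
          have hψj : ψ j = sSup (S j) := IH j (by omega) j rfl
          have h1 : z.length - 1 ≤ ψ j := by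
            rw [hψj]; exact le_csSup (hbdd j) hwin
          have hjF : j ∈ Fil i := Finset.mem_filter.2 ⟨Finset.mem_univ _, hji, hpair⟩
          have h2 : ψ j ≤ (Fil i).sup ψ := Finset.le_sup hjF
          have hzpos : 0 < z.length := List.length_pos_iff.2 hzne
          rw [hψ' i]
          omega
  have key' : ∀ i, ψ i = sSup (S i) := fun i => key i i rfl
  refine ⟨key', ?_⟩
  set L : Set ℕ := {k | ∃ z : List α, z ≠ [] ∧ (∀ x ∈ X, z.Sublist x) ∧ z.length = k} with hL
  rcases Nat.eq_zero_or_pos x1.length with hn | hn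
  · have hx1nil : x1 = [] := List.length_eq_zero_iff.1 hn
    have hLe : L = ∅ := by
      ext k
      simp only [hL, Set.mem_setOf_eq, Set.mem_empty_iff_false, iff_false]
      rintro ⟨z, hzne, hzc, _⟩
      have := hzc x1 hx1
      rw [hx1nil] at this
      exact hzne (List.sublist_nil.1 this)
    rw [hLe, csSup_empty]
    have hb : Finset.univ.sup ψ ≤ ⊥ := Finset.sup_le fun i _ => absurd i.2 (by omega)
    exact (le_bot_iff.1 hb).symm
  · have hLne : L.Nonempty := by
      refine ⟨1, [x1.get ⟨0, hn⟩], by simp, fun x hx =>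
        List.singleton_sublist.2 (hmem _ x hx), rfl⟩
    have hLbdd : BddAbove L := by
      refine ⟨x1.length, ?_⟩
      rintro k ⟨z, _, hc, rfl⟩
      exact (hc x1 hx1).length_le
    apply le_antisymm
    · apply csSup_le hLne
      rintro k ⟨z, hzne, hzc, rfl⟩
      have hzx1 : z.Sublist x1 := hzc x1 hx1
      set a := z.getLast hzne with ha
      have haw : a ∈ x1 := hzx1.subset (List.getLast_mem hzne)
      have hjn : x1.idxOf a < x1.length := List.idxOf_lt_length_iff.2 haw
      set j : Fin x1.length := ⟨x1.idxOf a, hjn⟩ with hj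
      have hgj : x1.get j = a := List.getElem_idxOf hjn
      have hin : z.length ∈ S j := by
        refine ⟨z, hzne, hzc, ?_, rfl⟩
        rw [hgj]
        exact List.getLast?_eq_getLast hzne
      calc z.length ≤ sSup (S j) := le_csSup (hbdd j) hin
        _ = ψ j := (key' j).symm
        _ ≤ Finset.univ.sup ψ := Finset.le_sup (Finset.mem_univ j)
    · apply Finset.sup_le
      intro i _
      have hmemS : sSup (S i) ∈ S i := Nat.sSup_mem (hSne i) (hbdd i)
      obtain ⟨z, hzne, hzc, _, hzlen⟩ := hmemS
      rw [key' i]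
      exact le_csSup hLbdd ⟨z, hzne, hzc, hzlen⟩
end

section
/- For preference orderings (sequences with distinct symbols) x and y of the same length n, the quantity d(x,y) = sqrt(2^{n+1} − 2 − 2κ(x,y)) defines a metric on the set of permutations of a fixed n-element alphabet; in particular d(x,y) = 0 iff x = y, d is symmetric, and d satisfies the triangle inequality. -/
/-- The distance `d(x,y) = sqrt(2^(n+1) - 2 - 2·κ(x,y))`. -/
noncomputable def seqDist {α : Type*} (n : ℕ) (x y : List α) : ℝ :=
  Real.sqrt (2 ^ (n + 1) - 2 - 2 * ((commonSubseqs x y).ncard : ℝ))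

private lemma sqrt_add_le (a b : ℝ) (ha : 0 ≤ a) (hb : 0 ≤ b) :
    Real.sqrt (a + b) ≤ Real.sqrt a + Real.sqrt b := by
  have h : a + b ≤ (Real.sqrt a + Real.sqrt b) ^ 2 := by
    have := Real.sq_sqrt ha
    have := Real.sq_sqrt hb
    have := Real.sqrt_nonneg a
    have := Real.sqrt_nonneg b
    nlinarith [mul_nonneg (Real.sqrt_nonneg a) (Real.sqrt_nonneg b)]
  calc Real.sqrt (a + b) ≤ Real.sqrt ((Real.sqrt a + Real.sqrt b) ^ 2) :=
        Real.sqrt_le_sqrt h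
    _ = Real.sqrt a + Real.sqrt b := by
        rw [Real.sqrt_sq (by positivity)]

/-- Finset of nonempty sublists. -/
private def S {α : Type*} [DecidableEq α] (x : List α) : Finset (List α) :=
  x.sublists.toFinset.erase []

private lemma mem_S {α : Type*} [DecidableEq α] {x z : List α} :
    z ∈ S x ↔ z ≠ [] ∧ z.Sublist x := by
  simp [S, List.mem_sublists]

private lemma card_S {α : Type*} [DecidableEq α] {x : List α} (hx : x.Nodup) :
    (S x).card = 2 ^ x.length - 1 := by
  have h1 : x.sublists.toFinset.card = 2 ^ x.length := by
    rw [List.toFinset_card_of_nodup (List.nodup_sublists.2 hx), List.length_sublists]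
  rw [S, Finset.card_erase_of_mem (by simp), h1]

private lemma common_eq {α : Type*} [DecidableEq α] (x y : List α) :
    commonSubseqs x y = ↑(S x ∩ S y) := by
  ext z
  simp only [commonSubseqs, Set.mem_setOf_eq, Finset.coe_inter, Set.mem_inter_iff,
    Finset.mem_coe, mem_S]
  tauto

private lemma seqDist_eq {α : Type*} [DecidableEq α] {n : ℕ} {x y : List α}
    (hx : x.Nodup) (hy : y.Nodup) (hlx : x.length = n) (hly : y.length = n) :
    seqDist n x y = Real.sqrt ((symmDiff (S x) (S y)).card : ℝ) := by
  have hc : (commonSubseqs x y).ncard = (S x ∩ S y).card := by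
    rw [common_eq, Set.ncard_coe_finset]
  have hsd : symmDiff (S x) (S y) = (S x ∪ S y) \ (S x ∩ S y) :=
    symmDiff_eq_sup_sdiff_inf _ _
  have hsub : S x ∩ S y ⊆ S x ∪ S y := (Finset.inter_subset_left).trans Finset.subset_union_left
  have hcard : (symmDiff (S x) (S y)).card = (S x ∪ S y).card - (S x ∩ S y).card := by
    rw [hsd, Finset.card_sdiff_of_subset hsub]
  have huni := Finset.card_union_add_card_inter (S x) (S y)
  have h1 : 1 ≤ 2 ^ n := Nat.one_le_two_pow
  have hcx : (S x).card = 2 ^ n - 1 := by rw [card_S hx, hlx]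
  have hcy : (S y).card = 2 ^ n - 1 := by rw [card_S hy, hly]
  have hle : (S x ∩ S y).card ≤ (S x ∪ S y).card := Finset.card_le_card hsub
  unfold seqDist
  rw [hc]
  congr 1
  have : ((symmDiff (S x) (S y)).card : ℝ)
      = ((S x ∪ S y).card : ℝ) - ((S x ∩ S y).card : ℝ) := by
    rw [hcard, Nat.cast_sub hle]
  rw [this]
  have huniR : ((S x ∪ S y).card : ℝ) + ((S x ∩ S y).card : ℝ)
      = ((S x).card : ℝ) + ((S y).card : ℝ) := by exact_mod_cast huni
  have hcxR : ((S x).card : ℝ) = 2 ^ n - 1 := by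
    rw [hcx]; push_cast [Nat.cast_sub h1]; ring
  have hcyR : ((S y).card : ℝ) = 2 ^ n - 1 := by
    rw [hcy]; push_cast [Nat.cast_sub h1]; ring
  rw [hcxR, hcyR] at huniR
  have : (2:ℝ) ^ (n+1) = 2 * 2 ^ n := by ring
  linarith

private lemma S_eq_iff {α : Type*} [DecidableEq α] {x y : List α}
    (hlx : x.length = y.length) : S x = S y ↔ x = y := by
  constructor
  · intro h
    rcases eq_or_ne x [] with hx0 | hx0
    · subst hx0
      have : y.length = 0 := hlx.symm
      simpa using (List.length_eq_zero_iff.mp this).symm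
    · have hx : x ∈ S y := by rw [← h, mem_S]; exact ⟨hx0, List.Sublist.refl x⟩
      have hy0 : y ≠ [] := by intro h0; subst h0; exact hx0 (List.length_eq_zero_iff.mp hlx)
      have hy : y ∈ S x := by rw [h, mem_S]; exact ⟨hy0, List.Sublist.refl y⟩
      exact (mem_S.mp hx).2.antisymm (mem_S.mp hy).2
  · rintro rfl; rfl

theorem stmt16 {α : Type*} [DecidableEq α] (n : ℕ) (s : Finset α) (hs : s.card = n) :
    (∀ x y : List α, x.Nodup → y.Nodup → x.toFinset = s → y.toFinset = s →
      (seqDist n x y = 0 ↔ x = y)) ∧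
    (∀ x y : List α, x.Nodup → y.Nodup → x.toFinset = s → y.toFinset = s →
      seqDist n x y = seqDist n y x) ∧
    (∀ x y z : List α, x.Nodup → y.Nodup → z.Nodup →
      x.toFinset = s → y.toFinset = s → z.toFinset = s →
      seqDist n x z ≤ seqDist n x y + seqDist n y z) := by
  have hlen : ∀ x : List α, x.Nodup → x.toFinset = s → x.length = n := by
    intro x hx hxs
    rw [← List.toFinset_card_of_nodup hx, hxs, hs]
  refine ⟨?_, ?_, ?_⟩
  · intro x y hx hy hxs hys
    rw [seqDist_eq hx hy (hlen x hx hxs) (hlen y hy hys)]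
    rw [Real.sqrt_eq_zero (by positivity)]
    rw [← S_eq_iff ((hlen x hx hxs).trans (hlen y hy hys).symm)]
    constructor
    · intro h
      have : (symmDiff (S x) (S y)).card = 0 := by exact_mod_cast h
      have he : symmDiff (S x) (S y) = ∅ := Finset.card_eq_zero.mp this
      exact symmDiff_eq_bot.mp he
    · intro h; rw [h, symmDiff_self]; simp
  · intro x y hx hy hxs hys
    rw [seqDist_eq hx hy (hlen x hx hxs) (hlen y hy hys),
      seqDist_eq hy hx (hlen y hy hys) (hlen x hx hxs), symmDiff_comm]
  · intro x y z hx hy hz hxs hys hzs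
    rw [seqDist_eq hx hz (hlen x hx hxs) (hlen z hz hzs),
      seqDist_eq hx hy (hlen x hx hxs) (hlen y hy hys),
      seqDist_eq hy hz (hlen y hy hys) (hlen z hz hzs)]
    have htri : (symmDiff (S x) (S z)).card
        ≤ (symmDiff (S x) (S y)).card + (symmDiff (S y) (S z)).card := by
      calc (symmDiff (S x) (S z)).card
          ≤ (symmDiff (S x) (S y) ∪ symmDiff (S y) (S z)).card :=
            Finset.card_le_card (symmDiff_triangle _ _ _)
        _ ≤ _ := Finset.card_union_le _ _
    calc Real.sqrt ((symmDiff (S x) (S z)).card : ℝ)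
        ≤ Real.sqrt (((symmDiff (S x) (S y)).card : ℝ) + ((symmDiff (S y) (S z)).card : ℝ)) := by
          apply Real.sqrt_le_sqrt; exact_mod_cast htri
      _ ≤ _ := sqrt_add_le _ _ (by positivity) (by positivity)
end
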